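/- Let a > 0, h > 0, u_0 ∈ ℝ, and let (Ŷ_k)_{k≥0} be the jump chain of the second-order stochastic Euler dynamics for the ODE u' = −au, i.e. Ŷ_0 = u_0 and Ŷ_k = (1 − a H_k + a² H_k²/2) Ŷ_{k−1} with independent H_k ∼ Exp(mean h). Then for every k ∈ ℕ₀: 𝔼[Ŷ_k] = (1 − ah + a²h²)^k · u_0. In particular, if u_0 ≠ 0, then 𝔼[Ŷ_k] → 0 as k → ∞ if and only if ah < 1. -/

import Mathlib

open MeasureTheory ProbabilityTheory Real Set

/-- The jump chain of the second-order stochastic Euler dynamics for `u' = −au`: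
`Ŷ_0 = u₀`, `Ŷ_k = (1 − a H_k + a² H_k²/2) Ŷ_{k−1}` (here `H i` stands for `H_{i+1}`). -/
noncomputable def eulerChain2 {Ω : Type*} (a u0 : ℝ) (H : ℕ → Ω → ℝ) : ℕ → Ω → ℝ
  | 0, _ => u0
  | (k + 1), ω => (1 - a * H k ω + a ^ 2 * (H k ω) ^ 2 / 2) * eulerChain2 a u0 H k ω

lemma exp_moment (n : ℕ) {r : ℝ} (hr : 0 < r) :
    Integrable (fun x : ℝ => x ^ n) (expMeasure r) ∧
      ∫ x, x ^ n ∂(expMeasure r) = n.factorial / r ^ n := by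
  set d : ℝ → NNReal := fun x => Real.toNNReal (gammaPDFReal 1 r x) with hd
  have hdm : Measurable d := (measurable_gammaPDFReal 1 r).real_toNNReal
  have hmeq : expMeasure r = MeasureTheory.volume.withDensity (fun x => (d x : ENNReal)) := rfl
  have key : ∀ x : ℝ, d x • (x ^ n : ℝ)
      = Set.indicator (Set.Ici (0:ℝ)) (fun x => x ^ n * (r * Real.exp (-(r*x)))) x := by
    intro x
    by_cases hx : 0 ≤ x
    · rw [Set.indicator_of_mem (Set.mem_Ici.2 hx), NNReal.smul_def, hd]
      have hnn : 0 ≤ gammaPDFReal 1 r x := gammaPDFReal_nonneg zero_lt_one hr x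
      rw [Real.coe_toNNReal _ hnn]
      rw [smul_eq_mul, gammaPDFReal, if_pos hx, Real.Gamma_one, sub_self, Real.rpow_zero,
        Real.rpow_one]
      ring
    · rw [Set.indicator_of_notMem (fun hmem => hx (Set.mem_Ici.1 hmem)), NNReal.smul_def, hd]
      simp [gammaPDFReal, if_neg hx]
  have hIoi : IntegrableOn (fun x => x ^ n * (r * Real.exp (-(r*x)))) (Set.Ioi (0:ℝ)) := by
    have h0 : IntegrableOn (fun x : ℝ => x ^ (n:ℝ) * Real.exp (-r * x ^ (1:ℝ))) (Set.Ioi (0:ℝ)) :=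
      integrableOn_rpow_mul_exp_neg_mul_rpow (by simpa using (by linarith [Nat.cast_nonneg (α:=ℝ) n] : (-1:ℝ) < (n:ℝ))) zero_lt_one hr
    refine IntegrableOn.congr_fun (h0.const_mul r) (fun x hx => ?_) measurableSet_Ioi
    rw [Real.rpow_natCast, Real.rpow_one, neg_mul]
    ring
  have hind : Integrable (Set.indicator (Set.Ici (0:ℝ))
      (fun x => x ^ n * (r * Real.exp (-(r*x))))) := by
    rw [integrable_indicator_iff measurableSet_Ici]
    rwa [integrableOn_Ici_iff_integrableOn_Ioi]
  constructor
  · rw [hmeq, integrable_withDensity_iff_integrable_smul hdm]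
    exact hind.congr (Filter.Eventually.of_forall fun x => (key x).symm)
  · rw [hmeq, integral_withDensity_eq_integral_smul hdm]
    simp_rw [key]
    rw [integral_indicator measurableSet_Ici, integral_Ici_eq_integral_Ioi]
    have : ∀ x ∈ Set.Ioi (0:ℝ),
        x ^ n * (r * Real.exp (-(r*x))) = r * (x ^ (((n:ℝ)+1) - 1) * Real.exp (-(r*x))) := by
      intro x hx
      rw [add_sub_cancel_right, Real.rpow_natCast]
      ring
    rw [setIntegral_congr_fun measurableSet_Ioi this, integral_const_mul,
      integral_rpow_mul_exp_neg_mul_Ioi (by positivity) hr]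
    have hg : Real.Gamma ((n:ℝ)+1) = n.factorial := by
      exact_mod_cast Real.Gamma_nat_eq_factorial n
    rw [hg]
    have : ((1:ℝ)/r) ^ ((n:ℝ)+1) = (1/r) ^ (n+1) := by
      rw [show ((n:ℝ)+1) = ((n+1 : ℕ) : ℝ) by push_cast; ring, Real.rpow_natCast]
    rw [this]
    field_simp
    rw [show r * (1 / r) ^ (n + 1) * r ^ n = (r * (1 / r)) ^ (n + 1) by ring,
      mul_one_div_cancel hr.ne', one_pow]

lemma exp_poly_integral {a h : ℝ} (ha : 0 < a) (hh : 0 < h) :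
    Integrable (fun x : ℝ => 1 - a * x + a ^ 2 * x ^ 2 / 2) (expMeasure h⁻¹) ∧
      ∫ x, (1 - a * x + a ^ 2 * x ^ 2 / 2) ∂(expMeasure h⁻¹)
        = 1 - a * h + a ^ 2 * h ^ 2 := by
  have hr : 0 < h⁻¹ := inv_pos.2 hh
  haveI : IsProbabilityMeasure (expMeasure h⁻¹) := isProbabilityMeasure_expMeasure hr
  have h1 := exp_moment 1 hr
  have h2 := exp_moment 2 hr
  have hi1 : Integrable (fun x : ℝ => a * x) (expMeasure h⁻¹) := by
    simpa using h1.1.const_mul a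
  have hi2 : Integrable (fun x : ℝ => a ^ 2 * x ^ 2 / 2) (expMeasure h⁻¹) := by
    simpa [mul_div_assoc] using (h2.1.const_mul (a^2)).div_const 2
  have hic : Integrable (fun _ : ℝ => (1:ℝ)) (expMeasure h⁻¹) := integrable_const 1
  constructor
  · exact (hic.sub hi1).add hi2
  · have hi01 : Integrable (fun x : ℝ => 1 - a * x) (expMeasure h⁻¹) := by
      exact hic.sub hi1
    rw [integral_add hi01 hi2, integral_sub hic hi1]
    rw [integral_const, integral_const_mul]
    have e1 : ∫ x, x ∂(expMeasure h⁻¹) = h := by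
      have := h1.2
      simp only [pow_one] at this
      rw [this]
      field_simp
      norm_num [Nat.factorial]
    have e2 : ∫ x, x ^ 2 ∂(expMeasure h⁻¹) = 2 * h ^ 2 := by
      rw [h2.2]
      norm_num [Nat.factorial]
    have : (fun x : ℝ => a ^ 2 * x ^ 2 / 2) = fun x => (a^2/2) * x ^ 2 := by funext; ring
    rw [this, integral_const_mul, e1, e2]
    simp
    ring

/-- `𝔼[Ŷ_k] = (1 − ah + a²h²)^k u₀`, and for `u₀ ≠ 0`, `𝔼[Ŷ_k] → 0` iff `ah < 1`. -/
theorem stmt18 {Ω : Type*} [MeasurableSpace Ω] (P : Measure Ω) [IsProbabilityMeasure P]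
    (a h u0 : ℝ) (ha : 0 < a) (hh : 0 < h)
    (H : ℕ → Ω → ℝ) (hHmeas : ∀ k, Measurable (H k))
    (hHindep : iIndepFun H P)
    (hHdist : ∀ k, Measure.map (H k) P = expMeasure h⁻¹) :
    (∀ k : ℕ, ∫ ω, eulerChain2 a u0 H k ω ∂P = (1 - a * h + a ^ 2 * h ^ 2) ^ k * u0) ∧
      (u0 ≠ 0 →
        (Filter.Tendsto (fun k : ℕ => ∫ ω, eulerChain2 a u0 H k ω ∂P)
            Filter.atTop (nhds 0) ↔ a * h < 1)) := by
  set q : ℝ := 1 - a * h + a ^ 2 * h ^ 2 with hq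
  set f : ℝ → ℝ := fun x => 1 - a * x + a ^ 2 * x ^ 2 / 2 with hf
  have hfm : Measurable f := by fun_prop
  set g : ℕ → Ω → ℝ := fun i ω => f (H i ω) with hg
  have hgmeas : ∀ i, Measurable (g i) := fun i => hfm.comp (hHmeas i)
  have hgind : iIndepFun g P :=
    hHindep.comp (fun _ => f) (fun _ => hfm)
  have hprod : ∀ k ω, eulerChain2 a u0 H k ω = (∏ i ∈ Finset.range k, g i ω) * u0 := by
    intro k
    induction k with
    | zero => intro ω; simp [eulerChain2]
    | succ k ih =>
      intro ω
      rw [eulerChain2, ih ω, Finset.prod_range_succ]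
      simp only [hg, hf]
      ring
  have hEg : ∀ k, ∫ ω, g k ω ∂P = q := by
    intro k
    have := integral_map (hHmeas k).aemeasurable
      (hfm.aestronglyMeasurable (μ := Measure.map (H k) P))
    rw [hHdist k] at this
    simp only [hg]
    rw [← this, (exp_poly_integral ha hh).2]
  have hmain : ∀ k, ∫ ω, (∏ i ∈ Finset.range k, g i ω) ∂P = q ^ k := by
    intro k
    induction k with
    | zero => simp
    | succ k ih =>
      have hip : IndepFun (∏ j ∈ Finset.range k, g j) (g k) P :=
        hgind.indepFun_prod_range_succ hgmeas k
      have hm1 : AEStronglyMeasurable (∏ j ∈ Finset.range k, g j) P := by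
        rw [Finset.prod_fn]
        exact (Finset.measurable_prod _ (fun i _ => hgmeas i)).aestronglyMeasurable
      have := hip.integral_mul_eq_mul_integral hm1 (hgmeas k).aestronglyMeasurable
      calc ∫ ω, (∏ i ∈ Finset.range (k+1), g i ω) ∂P
          = ∫ ω, ((∏ j ∈ Finset.range k, g j) * g k) ω ∂P := by
            simp [Finset.prod_range_succ]
        _ = (∫ ω, (∏ j ∈ Finset.range k, g j) ω ∂P) * ∫ ω, g k ω ∂P := this
        _ = q ^ k * q := by
            rw [hEg k, ← ih]
            simp [Finset.prod_fn]
        _ = q ^ (k+1) := by ring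
  have hpart1 : ∀ k : ℕ, ∫ ω, eulerChain2 a u0 H k ω ∂P = q ^ k * u0 := by
    intro k
    simp_rw [hprod k]
    rw [integral_mul_const, hmain k]
  refine ⟨hpart1, fun hu0 => ?_⟩
  have hq0 : 0 < q := by nlinarith [sq_nonneg (2*a*h - 1)]
  constructor
  · intro htend
    by_contra h1
    push_neg at h1
    have hx : 0 ≤ a*h*(a*h-1) := mul_nonneg (mul_pos ha hh).le (by linarith)
    have hq1 : 1 ≤ q := by nlinarith
    have hlb : ∀ k : ℕ, |u0| ≤ |q ^ k * u0| := by
      intro k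
      rw [abs_mul, abs_of_nonneg (pow_nonneg hq0.le k)]
      nlinarith [one_le_pow₀ hq1 (n := k), abs_nonneg u0, abs_pos.2 hu0]
    have h2 := htend (Metric.ball_mem_nhds 0 (abs_pos.2 hu0))
    rw [Filter.mem_map, Filter.mem_atTop_sets] at h2
    obtain ⟨k, hk⟩ := h2
    have := hk k le_rfl
    simp only [Set.mem_preimage, Metric.mem_ball, Real.dist_eq, sub_zero, hpart1 k] at this
    exact absurd this (not_lt.2 (hlb k))
  · intro hah
    have hx : 0 < a*h*(1-a*h) := mul_pos (mul_pos ha hh) (by linarith)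
    have hq1 : q < 1 := by nlinarith
    have : Filter.Tendsto (fun k : ℕ => q ^ k * u0) Filter.atTop (nhds (0 * u0)) :=
      (tendsto_pow_atTop_nhds_zero_of_lt_one hq0.le hq1).mul_const u0
    simpa [hpart1] using this
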